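/- arXiv:2106.14211 — 8 statements merged into one kernel-verified Lean document; each statement's English description precedes it below -/
import Mathlib

section
/- For every real ξ with 0 ≤ ξ ≤ 1, every r ∈ [0,1] and every θ ∈ [-π,π], the complex modulus satisfies |1 - r·e^{iθ}·ξ| ≥ (1/2)·(|θ|/π + 1 - ξ). -/
open Real

theorem green_denominator_lower_bound
    (ξ r θ : ℝ) (hξ0 : 0 ≤ ξ) (hξ1 : ξ ≤ 1) (hr0 : 0 ≤ r) (hr1 : r ≤ 1)
    (hθ1 : -Real.pi ≤ θ) (hθ2 : θ ≤ Real.pi) :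
    (1 / 2) * (|θ| / Real.pi + 1 - ξ) ≤
      ‖1 - (r : ℂ) * Complex.exp (θ * Complex.I) * (ξ : ℂ)‖ := by
  have hπ := Real.pi_pos
  set z : ℂ := Complex.exp (θ * Complex.I) with hzdef
  set A := ‖1 - (r : ℂ) * z * ξ‖ with hAdef
  have hz : ‖z‖ = 1 := Complex.norm_exp_ofReal_mul_I θ
  have hρ1 : r * ξ ≤ 1 := by nlinarith
  have hρξ : r * ξ ≤ ξ := by nlinarith
  have hnorm : ‖(r:ℂ) * z * ξ‖ = r * ξ := by
    rw [norm_mul, norm_mul, hz, Complex.norm_real, Complex.norm_real, Real.norm_eq_abs, Real.norm_eq_abs,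
      abs_of_nonneg hr0, abs_of_nonneg hξ0, mul_one]
  have h1 : 1 - r * ξ ≤ A := by
    have h := norm_sub_norm_le (1:ℂ) ((r:ℂ) * z * ξ)
    simpa [norm_mul, hz, abs_of_nonneg hr0, abs_of_nonneg hξ0] using h
  have hsub : ‖(r:ℂ) * z * ξ - z‖ = 1 - r * ξ := by
    have he : (r:ℂ) * z * ξ - z = (((r * ξ : ℝ) : ℂ) - 1) * z := by
      push_cast; ring
    rw [he, norm_mul, hz, mul_one]
    rw [show (((r * ξ : ℝ) : ℂ) - 1) = (((r * ξ - 1 : ℝ)) : ℂ) by push_cast; ring]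
    rw [Complex.norm_real, Real.norm_eq_abs, abs_of_nonpos (by linarith)]
    ring
  have h2 : ‖1 - z‖ ≤ A + (1 - r * ξ) := by
    have he : (1:ℂ) - z = (1 - (r:ℂ) * z * ξ) + ((r:ℂ) * z * ξ - z) := by ring
    calc ‖1 - z‖ = ‖(1 - (r:ℂ) * z * ξ) + ((r:ℂ) * z * ξ - z)‖ := by
          rw [← he]
      _ ≤ A + ‖(r:ℂ) * z * ξ - z‖ := norm_add_le _ _
      _ = A + (1 - r * ξ) := by rw [hsub]
  have h3 : ‖1 - z‖ = 2 * |Real.sin (θ / 2)| := by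
    have hsq : (‖1 - z‖)^2 = 2 - 2 * Real.cos θ := by
      rw [Complex.sq_norm, hzdef, Complex.exp_mul_I]
      simp [Complex.normSq_apply, ← Complex.ofReal_cos, ← Complex.ofReal_sin]
      nlinarith [Real.sin_sq_add_cos_sq θ]
    have hhalf : 2 - 2 * Real.cos θ = (2 * |Real.sin (θ / 2)|)^2 := by
      have h := Real.sin_sq_eq_half_sub (θ / 2)
      rw [show 2 * (θ / 2) = θ by ring] at h
      rw [mul_pow, sq_abs]
      nlinarith
    have h0 : 0 ≤ 2 * |Real.sin (θ / 2)| := by positivity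
    nlinarith [norm_nonneg (1 - z), sq_nonneg (‖1 - z‖ - 2 * |Real.sin (θ / 2)|)]
  have h4 : |θ| / Real.pi ≤ |Real.sin (θ / 2)| := by
    have habs : |Real.sin (θ / 2)| = Real.sin (|θ| / 2) := by
      rcases le_or_gt 0 θ with h | h
      · rw [abs_of_nonneg h, abs_of_nonneg]
        exact Real.sin_nonneg_of_nonneg_of_le_pi (by linarith) (by linarith)
      · rw [abs_of_neg h]
        rw [show -θ / 2 = -(θ/2) by ring, Real.sin_neg, abs_of_nonpos]
        exact Real.sin_nonpos_of_nonpos_of_neg_pi_le (by linarith) (by linarith)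
    rw [habs]
    have habs2 : |θ| ≤ Real.pi := abs_le.mpr ⟨hθ1, hθ2⟩
    have := Real.mul_le_sin (x := |θ| / 2) (by positivity) (by linarith)
    calc |θ| / Real.pi = 2 / Real.pi * (|θ| / 2) := by field_simp
      _ ≤ Real.sin (|θ| / 2) := this
  -- combine
  linarith
end

section
/- For every real ξ with -1 ≤ ξ ≤ 1, every r ∈ [0,1] and every θ ∈ ℝ, the complex moduli satisfy |1 - e^{iθ}·ξ| ≤ 2·|1 - r·e^{iθ}·ξ|. -/
theorem green_parameter_comparison
    (ξ r θ : ℝ) (hξ0 : -1 ≤ ξ) (hξ1 : ξ ≤ 1) (hr0 : 0 ≤ r) (hr1 : r ≤ 1) :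
    ‖1 - Complex.exp (θ * Complex.I) * (ξ : ℂ)‖ ≤
      2 * ‖1 - (r : ℂ) * Complex.exp (θ * Complex.I) * (ξ : ℂ)‖ := by
  set z : ℂ := Complex.exp (θ * Complex.I) * (ξ : ℂ) with hz
  have hez : ‖Complex.exp (θ * Complex.I)‖ = 1 :=
    Complex.norm_exp_ofReal_mul_I θ
  have hzabs : ‖z‖ = |ξ| := by
    rw [hz, norm_mul, hez, Complex.norm_real, Real.norm_eq_abs, one_mul]
  have hξle : |ξ| ≤ 1 := abs_le.mpr ⟨hξ0, hξ1⟩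
  have hrz : (r : ℂ) * Complex.exp (θ * Complex.I) * (ξ : ℂ) = (r : ℂ) * z := by
    rw [hz]; ring
  rw [hrz]
  have h1 : (1 : ℂ) - z = (1 - (r : ℂ) * z) - ((1 : ℂ) - r) * z := by ring
  have hlow : 1 - r * |ξ| ≤ ‖1 - (r : ℂ) * z‖ := by
    have := norm_sub_norm_le (1 : ℂ) ((r : ℂ) * z)
    simpa [norm_mul, hzabs, Complex.norm_real,
      abs_of_nonneg hr0] using this
  have hstep : ‖(1 - (r : ℂ)) * z‖ ≤ ‖1 - (r : ℂ) * z‖ := by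
    have h1' : ‖(1 - (r : ℂ)) * z‖ = (1 - r) * |ξ| := by
      rw [norm_mul, hzabs]
      have hc : ‖1 - (r : ℂ)‖ = 1 - r := by
        rw [show (1 : ℂ) - (r : ℂ) = ((1 - r : ℝ) : ℂ) by push_cast; ring,
          Complex.norm_real, Real.norm_eq_abs, abs_of_nonneg (by linarith)]
      rw [hc]
    rw [h1']
    have h2' : (1 - r) * |ξ| ≤ 1 - r * |ξ| := by nlinarith [abs_nonneg ξ]
    linarith
  calc ‖1 - z‖
      ≤ ‖1 - (r : ℂ) * z‖ + ‖(1 - (r : ℂ)) * z‖ := by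
        rw [h1]; exact norm_sub_le _ _
    _ ≤ 2 * ‖1 - (r : ℂ) * z‖ := by linarith
end

section
/- For every integer d ≥ 1 and every k = (k_1, …, k_d) ∈ ℝ^d, one has 1 - ∏_{j=1}^{d} cos(2k_j) ≤ 2·(1 - (∏_{j=1}^{d} cos k_j)²). -/
lemma bcc_aux (n : ℕ) (x : Fin n → ℝ) (hx : ∀ j, 0 ≤ x j ∧ x j ≤ 1) :
    |∏ j, (2 * x j - 1)| ≤ 1 ∧ 2 * ∏ j, x j - 1 ≤ ∏ j, (2 * x j - 1) := by
  induction n with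
  | zero => norm_num
  | succ m ih =>
    obtain ⟨habs, hle⟩ := ih (fun j => x j.succ) (fun j => hx j.succ)
    rw [Fin.prod_univ_succ, Fin.prod_univ_succ]
    set A := ∏ j : Fin m, (2 * x (Fin.succ j) - 1) with hA
    set B := ∏ j : Fin m, x (Fin.succ j) with hB
    have hB0 : 0 ≤ B := Finset.prod_nonneg (fun j _ => (hx j.succ).1)
    have hB1 : B ≤ 1 := Finset.prod_le_one (fun j _ => (hx j.succ).1)
      (fun j _ => (hx j.succ).2)
    obtain ⟨hx0, hx1⟩ := hx 0
    have habs' := abs_le.mp habs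
    constructor
    · rw [abs_mul]
      have h1 : |2 * x 0 - 1| ≤ 1 := by rw [abs_le]; constructor <;> linarith
      calc |2 * x 0 - 1| * |A| ≤ 1 * 1 :=
            mul_le_mul h1 habs (abs_nonneg _) zero_le_one
        _ = 1 := by ring
    · rcases le_or_gt (1 : ℝ) (2 * x 0) with h | h
      · have : (2 * x 0 - 1) * (2 * B - 1) ≤ (2 * x 0 - 1) * A :=
          mul_le_mul_of_nonneg_left hle (by linarith)
        nlinarith
      · have : (2 * x 0 - 1) * 1 ≤ (2 * x 0 - 1) * A := by
          apply mul_le_mul_of_nonpos_left habs'.2 (by linarith)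
        nlinarith

theorem bcc_double_angle_inequality
    (d : ℕ) (hd : 1 ≤ d) (k : Fin d → ℝ) :
    1 - ∏ j, Real.cos (2 * k j) ≤ 2 * (1 - (∏ j, Real.cos (k j)) ^ 2) := by
  have hx : ∀ j : Fin d, 0 ≤ Real.cos (k j) ^ 2 ∧ Real.cos (k j) ^ 2 ≤ 1 :=
    fun j => ⟨sq_nonneg _, by nlinarith [Real.neg_one_le_cos (k j), Real.cos_le_one (k j)]⟩
  obtain ⟨_, hle⟩ := bcc_aux d (fun j => Real.cos (k j) ^ 2) hx
  have h1 : ∏ j, Real.cos (2 * k j) = ∏ j, (2 * Real.cos (k j) ^ 2 - 1) :=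
    Finset.prod_congr rfl (fun j _ => Real.cos_two_mul (k j))
  have h2 : (∏ j, Real.cos (k j)) ^ 2 = ∏ j, Real.cos (k j) ^ 2 :=
    (Finset.prod_pow _ _ _).symm
  rw [h1, h2]
  linarith
end

section
/- For every integer d ≥ 1 and all reals ξ_1, …, ξ_d ∈ [0,1], one has 1 - 2·∏_{j=1}^{d} ξ_j + ∏_{j=1}^{d} (2ξ_j - 1) ≥ 0. -/
lemma h_d_aux {ι : Type*} [DecidableEq ι] (ξ : ι → ℝ) :
    ∀ s : Finset ι, (∀ j ∈ s, 0 ≤ ξ j) → (∀ j ∈ s, ξ j ≤ 1) →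
      (0 ≤ 1 - 2 * ∏ j ∈ s, ξ j + ∏ j ∈ s, (2 * ξ j - 1)) ∧
        (∏ j ∈ s, (2 * ξ j - 1)) ≤ 1 := by
  intro s
  induction s using Finset.induction_on with
  | empty => intro _ _; norm_num
  | @insert a s ha ih =>
    intro h0 h1
    have h0' : ∀ j ∈ s, 0 ≤ ξ j := fun j hj => h0 j (Finset.mem_insert_of_mem hj)
    have h1' : ∀ j ∈ s, ξ j ≤ 1 := fun j hj => h1 j (Finset.mem_insert_of_mem hj)
    obtain ⟨ihA, ihB⟩ := ih h0' h1'
    have hP0 : 0 ≤ ∏ j ∈ s, ξ j := Finset.prod_nonneg h0'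
    have hP1 : ∏ j ∈ s, ξ j ≤ 1 := Finset.prod_le_one h0' h1'
    have ha0 : 0 ≤ ξ a := h0 a (Finset.mem_insert_self a s)
    have ha1 : ξ a ≤ 1 := h1 a (Finset.mem_insert_self a s)
    rw [Finset.prod_insert ha, Finset.prod_insert ha]
    set P := ∏ j ∈ s, ξ j with hP
    set Q := ∏ j ∈ s, (2 * ξ j - 1) with hQ
    have hQlb : 2 * P - 1 ≤ Q := by linarith
    constructor
    · rcases le_or_gt (1/2 : ℝ) (ξ a) with hc | hc
      · nlinarith [mul_nonneg (sub_nonneg.2 ha1) (sub_nonneg.2 hP1)]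
      · nlinarith [mul_nonneg ha0 (sub_nonneg.2 hP1)]
    · rcases le_or_gt (1/2 : ℝ) (ξ a) with hc | hc
      · nlinarith
      · nlinarith

theorem h_d_nonneg
    (d : ℕ) (hd : 1 ≤ d) (ξ : Fin d → ℝ)
    (h0 : ∀ j, 0 ≤ ξ j) (h1 : ∀ j, ξ j ≤ 1) :
    0 ≤ 1 - 2 * ∏ j, ξ j + ∏ j, (2 * ξ j - 1) := by
  exact (h_d_aux ξ Finset.univ (fun j _ => h0 j) (fun j _ => h1 j)).1
end

section
/- Let J ≥ 1 be an integer and t_1, …, t_J ∈ ℝ. Then 0 ≤ 1 - cos(t_1 + ⋯ + t_J) ≤ J·∑_{j=1}^{J} (1 - cos t_j). -/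
open Complex in
lemma norm_one_sub_exp_sq (θ : ℝ) :
    ‖(1 : ℂ) - Complex.exp (θ * Complex.I)‖ ^ 2 = 2 * (1 - Real.cos θ) := by
  rw [Complex.exp_mul_I]
  have h : ((1 : ℂ) - (Complex.cos θ + Complex.sin θ * Complex.I)) =
      Complex.mk (1 - Real.cos θ) (-Real.sin θ) := by
    apply Complex.ext <;> simp [Complex.cos_ofReal_re, Complex.sin_ofReal_re]
  rw [h, Complex.sq_norm, Complex.normSq_mk]
  nlinarith [Real.sin_sq_add_cos_sq θ]

lemma tele (n : ℕ) (t : Fin n → ℝ) :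
    ‖(1 : ℂ) - Complex.exp ((∑ j, t j : ℝ) * Complex.I)‖ ≤
      ∑ j, ‖(1 : ℂ) - Complex.exp ((t j : ℝ) * Complex.I)‖ := by
  induction n with
  | zero => simp
  | succ n ih =>
    rw [Fin.sum_univ_succ, Fin.sum_univ_succ]
    set s : ℝ := ∑ j : Fin n, t j.succ
    have key : (1 : ℂ) - Complex.exp ((t 0 + s : ℝ) * Complex.I) =
        ((1 : ℂ) - Complex.exp ((t 0 : ℝ) * Complex.I)) +
          Complex.exp ((t 0 : ℝ) * Complex.I) * ((1 : ℂ) - Complex.exp ((s : ℝ) * Complex.I)) := by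
      push_cast
      rw [add_mul, Complex.exp_add]
      ring
    rw [key]
    refine (norm_add_le _ _).trans ?_
    rw [norm_mul, Complex.norm_exp_ofReal_mul_I, one_mul]
    exact add_le_add_right (ih fun j => t j.succ) _

theorem cosine_telescope
    (J : ℕ) (hJ : 1 ≤ J) (t : Fin J → ℝ) :
    0 ≤ 1 - Real.cos (∑ j, t j) ∧
      1 - Real.cos (∑ j, t j) ≤ (J : ℝ) * ∑ j, (1 - Real.cos (t j)) := by
  constructor
  · linarith [Real.cos_le_one (∑ j, t j)]
  · set a : Fin J → ℝ := fun j => ‖(1 : ℂ) - Complex.exp ((t j : ℝ) * Complex.I)‖ with ha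
    have h1 : ‖(1 : ℂ) - Complex.exp ((∑ j, t j : ℝ) * Complex.I)‖ ≤ ∑ j, a j := tele J t
    have h2 : ‖(1 : ℂ) - Complex.exp ((∑ j, t j : ℝ) * Complex.I)‖ ^ 2 ≤ (∑ j, a j) ^ 2 := by
      apply pow_le_pow_left₀ (norm_nonneg _) h1
    have hcs : (∑ j, a j) ^ 2 ≤ (J : ℝ) * ∑ j, a j ^ 2 := by
      simpa using sq_sum_le_card_mul_sum_sq (s := Finset.univ) (f := a)
    have h3 : ∀ j, a j ^ 2 = 2 * (1 - Real.cos (t j)) := fun j => norm_one_sub_exp_sq (t j)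
    have h4 : ‖(1 : ℂ) - Complex.exp ((∑ j, t j : ℝ) * Complex.I)‖ ^ 2
        = 2 * (1 - Real.cos (∑ j, t j)) := norm_one_sub_exp_sq _
    have h5 : ∑ j, a j ^ 2 = 2 * ∑ j, (1 - Real.cos (t j)) := by
      rw [Finset.mul_sum]; exact Finset.sum_congr rfl fun j _ => h3 j
    nlinarith [h2, hcs]
end

section
/- Let d ≥ 1 be an integer. For every k ∈ [-π,π]^d and every θ ∈ [-π,π], there exist k̃ ∈ [-π/2, π/2]^d and θ' ∈ [-π,π] such that for every r ≥ 0 and every function f : ℤ^d × ℕ → ℝ satisfying (i) f(-x, t) = f(x, t) for all (x,t), (ii) f(x, t) = 0 unless x_j ≡ t (mod 2) for every coordinate j = 1,…,d, and (iii) ∑_{(x,t) ∈ ℤ^d × ℕ} |f(x,t)|·r^t < ∞, one has ∑_{(x,t)} f(x,t)·r^t·e^{i(k·x + θt)} = ∑_{(x,t)} f(x,t)·r^t·e^{i(k̃·x + θ't)}. -/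
open Real

lemma exp_eq_of_sub_eq (a b : ℝ) (K : ℤ) (h : a - b = 2 * Real.pi * K) :
    Complex.exp (Complex.I * (a : ℂ)) = Complex.exp (Complex.I * (b : ℂ)) := by
  have ha : (a : ℂ) = (b : ℂ) + (K : ℂ) * (2 * Real.pi) := by
    have : a = b + 2 * Real.pi * K := by linarith
    rw [this]; push_cast; ring
  rw [ha]
  have : Complex.I * ((b : ℂ) + (K : ℂ) * (2 * Real.pi)) =
      (K : ℂ) * (2 * (Real.pi : ℂ) * Complex.I) + Complex.I * (b : ℂ) := by ring
  rw [this, Complex.exp_add, Complex.exp_int_mul_two_pi_mul_I, one_mul]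

theorem fourier_laplace_reflection
    (d : ℕ) (hd : 1 ≤ d) (k : Fin d → ℝ) (θ : ℝ)
    (hk : ∀ j, k j ∈ Set.Icc (-Real.pi) Real.pi)
    (hθ : θ ∈ Set.Icc (-Real.pi) Real.pi) :
    ∃ k' : Fin d → ℝ, ∃ θ' : ℝ,
      (∀ j, k' j ∈ Set.Icc (-(Real.pi / 2)) (Real.pi / 2)) ∧
      θ' ∈ Set.Icc (-Real.pi) Real.pi ∧
      ∀ r : ℝ, 0 ≤ r → ∀ f : (Fin d → ℤ) × ℕ → ℝ,
        (∀ x : Fin d → ℤ, ∀ t : ℕ, f (-x, t) = f (x, t)) →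
        (∀ x : Fin d → ℤ, ∀ t : ℕ,
          (¬ ∀ j, x j % 2 = (t : ℤ) % 2) → f (x, t) = 0) →
        Summable (fun p : (Fin d → ℤ) × ℕ => |f p| * r ^ p.2) →
        ∑' p : (Fin d → ℤ) × ℕ, (f p : ℂ) * (r : ℂ) ^ p.2 *
            Complex.exp (Complex.I *
              (((∑ j, k j * (p.1 j : ℝ)) + θ * (p.2 : ℝ) : ℝ) : ℂ)) =
        ∑' p : (Fin d → ℤ) × ℕ, (f p : ℂ) * (r : ℂ) ^ p.2 *
            Complex.exp (Complex.I *
              (((∑ j, k' j * (p.1 j : ℝ)) + θ' * (p.2 : ℝ) : ℝ) : ℂ)) := by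
  have hπ := Real.pi_pos
  set σ : Fin d → ℤ := fun j =>
    if Real.pi / 2 < k j then 1 else if k j < -(Real.pi / 2) then -1 else 0 with hσ
  set k' : Fin d → ℝ := fun j => k j - Real.pi * (σ j : ℝ) with hk'
  set Sg : ℤ := ∑ j, σ j with hSg
  set ε : ℤ := if Even Sg then 0 else (if 0 ≤ θ then 1 else -1) with hε
  set θ' : ℝ := θ - Real.pi * (ε : ℝ) with hθ'
  have hSge : Even (Sg + ε) := by
    rcases Int.even_or_odd Sg with h | h
    · have : ε = 0 := by simp [hε, h]
      simpa [this] using h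
    · have hne : ¬ Even Sg := by simpa [Int.not_even_iff_odd]
      by_cases h2 : 0 ≤ θ
      · simp only [hε, if_neg hne, if_pos h2]
        rcases h with ⟨m, hm⟩; exact ⟨m + 1, by omega⟩
      · simp only [hε, if_neg hne, if_neg h2]
        rcases h with ⟨m, hm⟩; exact ⟨m, by omega⟩
  refine ⟨k', θ', ?_, ?_, ?_⟩
  · intro j
    obtain ⟨h1, h2⟩ := hk j
    by_cases hA : Real.pi / 2 < k j
    · have : σ j = 1 := by simp [hσ, hA]
      simp only [hk', this, Set.mem_Icc]
      push_cast
      constructor <;> linarith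
    · by_cases hB : k j < -(Real.pi / 2)
      · have : σ j = -1 := by simp [hσ, hA, hB]
        simp only [hk', this, Set.mem_Icc]
        push_cast
        constructor <;> linarith
      · have : σ j = 0 := by simp [hσ, hA, hB]
        simp only [hk', this, Set.mem_Icc]
        push_cast
        constructor <;> linarith
  · obtain ⟨h1, h2⟩ := hθ
    by_cases h : Even Sg
    · simp only [hθ', hε, if_pos h, Set.mem_Icc]
      push_cast
      constructor <;> linarith
    · by_cases h2' : 0 ≤ θ
      · simp only [hθ', hε, if_neg h, if_pos h2', Set.mem_Icc]
        push_cast; constructor <;> linarith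
      · simp only [hθ', hε, if_neg h, if_neg h2', Set.mem_Icc]
        push_cast; constructor <;> linarith
  · intro r hr f hsym hpar hsum
    apply tsum_congr
    rintro ⟨x, t⟩
    by_cases hx : ∀ j, x j % 2 = (t : ℤ) % 2
    · -- exponentials agree
      congr 1
      set N : ℤ := ∑ j, σ j * x j with hN
      have hdiff : ((∑ j, k j * (x j : ℝ)) + θ * (t : ℝ)) -
          ((∑ j, k' j * (x j : ℝ)) + θ' * (t : ℝ)) =
          Real.pi * ((N : ℝ) + (ε : ℝ) * (t : ℝ)) := by
        simp only [hk', hθ', hN]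
        push_cast
        have hs : ∑ j, (k j - Real.pi * (σ j : ℝ)) * (x j : ℝ) =
            ∑ j, k j * (x j : ℝ) - Real.pi * ∑ j, (σ j : ℝ) * (x j : ℝ) := by
          rw [Finset.mul_sum, ← Finset.sum_sub_distrib]
          exact Finset.sum_congr rfl (fun j _ => by ring)
        rw [hs]; ring
      have heven : Even (N + ε * (t : ℤ)) := by
        have key : ∀ j, (2 : ℤ) ∣ (σ j * x j - σ j * (t : ℤ)) := by
          intro j
          have h1 : (2 : ℤ) ∣ (x j - (t : ℤ)) := by
            have := hx j; omega
          have h2 : σ j * x j - σ j * (t:ℤ) = σ j * (x j - t) := by ring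
          rw [h2]
          exact Dvd.dvd.mul_left h1 (σ j)
        have hNSg : (2 : ℤ) ∣ (N - Sg * (t : ℤ)) := by
          have : N - Sg * (t : ℤ) = ∑ j, (σ j * x j - σ j * (t : ℤ)) := by
            simp [hN, hSg, Finset.sum_sub_distrib, Finset.sum_mul]
          rw [this]
          exact Finset.dvd_sum (fun j _ => key j)
        rcases hSge with ⟨m, hm⟩
        have hsplit : N + ε * (t : ℤ) = (N - Sg * t) + (Sg + ε) * t := by ring
        rcases hNSg with ⟨c, hc⟩
        exact ⟨c + m * t, by rw [hsplit, hm, hc]; ring⟩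
      rcases heven with ⟨K, hK⟩
      apply exp_eq_of_sub_eq _ _ K
      rw [hdiff]
      have : (N : ℝ) + (ε : ℝ) * (t : ℝ) = 2 * (K : ℝ) := by
        have : ((N + ε * (t:ℤ) : ℤ) : ℝ) = ((K + K : ℤ) : ℝ) := by rw [hK]
        push_cast at this
        linarith
      rw [this]; ring
    · have : f (x, t) = 0 := hpar x t hx
      simp [this]
end

section
/- Let d ≥ 1, let a : ℤ^d × ℕ → ℝ, and let z ∈ ℂ satisfy ∑_{(x,t)} |a(x,t)|·|z|^t < ∞. For l, k ∈ ℝ^d define â^{sin}(l,k;z) = ∑_{(x,t)} a(x,t)·sin(l·x)·sin(k·x)·z^t. Then |â^{sin}(l,k;z)|² ≤ ( ∑_{(x,t)} |a(x,t)|·|z|^t·(1 - cos(2 l·x)) ) · ( ∑_{(x,t)} |a(x,t)|·|z|^t·(1 - cos(k·x)) ). -/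
open scoped BigOperators

/-- Cauchy–Schwarz for tsums of nonnegative reals. -/
lemma tsum_cauchy_schwarz {ι : Type*} (f g : ι → ℝ) (hf : ∀ i, 0 ≤ f i) (hg : ∀ i, 0 ≤ g i)
    (hf2 : Summable (fun i => f i ^ 2)) (hg2 : Summable (fun i => g i ^ 2)) :
    (∑' i, f i * g i) ^ 2 ≤ (∑' i, f i ^ 2) * ∑' i, g i ^ 2 := by
  have hfg : Summable (fun i => f i * g i) := by
    apply Summable.of_nonneg_of_le (fun i => mul_nonneg (hf i) (hg i))
      (fun i => ?_) (hf2.add hg2)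
    nlinarith [sq_nonneg (f i - g i)]
  have h1 : ∑' i, f i * g i ≤ Real.sqrt ((∑' i, f i ^ 2) * ∑' i, g i ^ 2) := by
    refine Summable.tsum_le_of_sum_le hfg (fun s => ?_)
    refine le_trans (Real.sum_mul_le_sqrt_mul_sqrt s f g) ?_
    rw [← Real.sqrt_mul (Finset.sum_nonneg fun i _ => sq_nonneg _)]
    apply Real.sqrt_le_sqrt
    exact mul_le_mul (Summable.sum_le_tsum s (fun i _ => sq_nonneg _) hf2)
      (Summable.sum_le_tsum s (fun i _ => sq_nonneg _) hg2)
      (Finset.sum_nonneg fun i _ => sq_nonneg _)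
      (tsum_nonneg fun i => sq_nonneg _)
  calc (∑' i, f i * g i) ^ 2
      ≤ Real.sqrt ((∑' i, f i ^ 2) * ∑' i, g i ^ 2) ^ 2 :=
        pow_le_pow_left₀ (tsum_nonneg fun i => mul_nonneg (hf i) (hg i)) h1 2
    _ = _ := Real.sq_sqrt (mul_nonneg (tsum_nonneg fun i => sq_nonneg _)
        (tsum_nonneg fun i => sq_nonneg _))

/-- `â^{sin}(l,k;z) = ∑ a(x,t) sin(l·x) sin(k·x) z^t`. -/
noncomputable def hatAsin {d : ℕ} (a : (Fin d → ℤ) × ℕ → ℝ) (z : ℂ) (l k : Fin d → ℝ) : ℂ :=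
  ∑' p : (Fin d → ℤ) × ℕ,
    (a p : ℂ) * (Real.sin (∑ j, l j * (p.1 j : ℝ)) : ℂ) *
      (Real.sin (∑ j, k j * (p.1 j : ℝ)) : ℂ) * z ^ p.2

theorem hatAsin_sq_bound
    (d : ℕ) (hd : 1 ≤ d) (a : (Fin d → ℤ) × ℕ → ℝ) (z : ℂ)
    (hsum : Summable (fun p : (Fin d → ℤ) × ℕ => |a p| * ‖z‖ ^ p.2))
    (l k : Fin d → ℝ) :
    ‖hatAsin a z l k‖ ^ 2 ≤
      (∑' p : (Fin d → ℤ) × ℕ, |a p| * ‖z‖ ^ p.2 *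
          (1 - Real.cos (2 * ∑ j, l j * (p.1 j : ℝ)))) *
        (∑' p : (Fin d → ℤ) × ℕ, |a p| * ‖z‖ ^ p.2 *
          (1 - Real.cos (∑ j, k j * (p.1 j : ℝ)))) := by
  set w : (Fin d → ℤ) × ℕ → ℝ := fun p => |a p| * ‖z‖ ^ p.2 with hw
  set u : (Fin d → ℤ) × ℕ → ℝ := fun p => |Real.sin (∑ j, l j * (p.1 j : ℝ))| with hu
  set v : (Fin d → ℤ) × ℕ → ℝ := fun p => |Real.sin (∑ j, k j * (p.1 j : ℝ))| with hv
  have hw0 : ∀ p : (Fin d → ℤ) × ℕ, 0 ≤ w p := fun p => mul_nonneg (abs_nonneg _) (pow_nonneg (norm_nonneg z) _)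
  have hu1 : ∀ p : (Fin d → ℤ) × ℕ, u p ≤ 1 := fun p => Real.abs_sin_le_one _
  have hv1 : ∀ p : (Fin d → ℤ) × ℕ, v p ≤ 1 := fun p => Real.abs_sin_le_one _
  have hu0 : ∀ p : (Fin d → ℤ) × ℕ, 0 ≤ u p := fun p => abs_nonneg _
  have hv0 : ∀ p : (Fin d → ℤ) × ℕ, 0 ≤ v p := fun p => abs_nonneg _
  -- F, G
  set F : (Fin d → ℤ) × ℕ → ℝ := fun p => Real.sqrt (w p) * u p with hF
  set G : (Fin d → ℤ) × ℕ → ℝ := fun p => Real.sqrt (w p) * v p with hG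
  have hFG : ∀ p : (Fin d → ℤ) × ℕ, F p * G p = w p * (u p * v p) := by
    intro p
    simp only [hF, hG]
    rw [show Real.sqrt (w p) * u p * (Real.sqrt (w p) * v p)
        = (Real.sqrt (w p) * Real.sqrt (w p)) * (u p * v p) by ring,
      Real.mul_self_sqrt (hw0 p)]
  have hF2 : ∀ p : (Fin d → ℤ) × ℕ, F p ^ 2 = w p * u p ^ 2 := by
    intro p; simp only [hF]; rw [mul_pow, Real.sq_sqrt (hw0 p)]
  have hG2 : ∀ p : (Fin d → ℤ) × ℕ, G p ^ 2 = w p * v p ^ 2 := by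
    intro p; simp only [hG]; rw [mul_pow, Real.sq_sqrt (hw0 p)]
  have hsumF2 : Summable (fun p => F p ^ 2) := by
    apply Summable.of_nonneg_of_le (fun p => sq_nonneg _) (fun p => ?_) hsum
    rw [hF2]
    calc w p * u p ^ 2 ≤ w p * 1 := by
          apply mul_le_mul_of_nonneg_left _ (hw0 p)
          nlinarith [hu1 p, hu0 p]
      _ = w p := mul_one _
  have hsumG2 : Summable (fun p => G p ^ 2) := by
    apply Summable.of_nonneg_of_le (fun p => sq_nonneg _) (fun p => ?_) hsum
    rw [hG2]
    calc w p * v p ^ 2 ≤ w p * 1 := by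
          apply mul_le_mul_of_nonneg_left _ (hw0 p)
          nlinarith [hv1 p, hv0 p]
      _ = w p := mul_one _
  -- Step 1: |hatAsin| ≤ ∑' w u v
  have hnorm : Summable (fun p : (Fin d → ℤ) × ℕ => ‖(a p : ℂ) * (Real.sin (∑ j, l j * (p.1 j : ℝ)) : ℂ) *
      (Real.sin (∑ j, k j * (p.1 j : ℝ)) : ℂ) * z ^ p.2‖) := by
    apply Summable.of_nonneg_of_le (fun p => norm_nonneg _) (fun p => ?_) hsum
    simp only [norm_mul, Complex.norm_real, norm_pow, Real.norm_eq_abs]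
    calc |a p| * |Real.sin (∑ j, l j * (p.1 j : ℝ))| * |Real.sin (∑ j, k j * (p.1 j : ℝ))|
          * ‖z‖ ^ p.2
        ≤ |a p| * 1 * 1 * ‖z‖ ^ p.2 := by
          apply mul_le_mul_of_nonneg_right _ (pow_nonneg (norm_nonneg z) _)
          apply mul_le_mul (mul_le_mul_of_nonneg_left (Real.abs_sin_le_one _) (abs_nonneg _))
            (Real.abs_sin_le_one _) (abs_nonneg _)
            (mul_nonneg (abs_nonneg _) zero_le_one)
      _ = w p := by rw [hw]; ring
  have hS : ‖hatAsin a z l k‖ ≤ ∑' p, w p * (u p * v p) := by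
    rw [hatAsin]
    refine le_trans (norm_tsum_le_tsum_norm hnorm) ?_
    refine Summable.tsum_le_tsum (fun p => ?_) hnorm ?_
    · simp only [norm_mul, Complex.norm_real, norm_pow, Real.norm_eq_abs,
        hw, hu, hv]
      exact le_of_eq (by ring)
    · apply Summable.of_nonneg_of_le
        (fun p => mul_nonneg (hw0 p) (mul_nonneg (hu0 p) (hv0 p))) (fun p => ?_) hsum
      calc w p * (u p * v p) ≤ w p * 1 := by
            apply mul_le_mul_of_nonneg_left _ (hw0 p)
            exact mul_le_one₀ (hu1 p) (hv0 p) (hv1 p)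
        _ = w p := mul_one _
  -- Cauchy–Schwarz
  have hCS := tsum_cauchy_schwarz F G (fun p => mul_nonneg (Real.sqrt_nonneg _) (hu0 p))
    (fun p => mul_nonneg (Real.sqrt_nonneg _) (hv0 p)) hsumF2 hsumG2
  simp_rw [hFG, hF2, hG2] at hCS
  -- bound the two factors
  have hsumA : Summable (fun p : (Fin d → ℤ) × ℕ => w p * (1 - Real.cos (2 * ∑ j, l j * (p.1 j : ℝ)))) := by
    apply Summable.of_nonneg_of_le
      (fun p => mul_nonneg (hw0 p) (by nlinarith [Real.cos_le_one (2 * ∑ j, l j * (p.1 j : ℝ))]))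
      (fun p => ?_) (hsum.mul_left 2)
    have := Real.neg_one_le_cos (2 * ∑ j, l j * (p.1 j : ℝ))
    nlinarith [hw0 p]
  have hsumB : Summable (fun p : (Fin d → ℤ) × ℕ => w p * (1 - Real.cos (∑ j, k j * (p.1 j : ℝ)))) := by
    apply Summable.of_nonneg_of_le
      (fun p => mul_nonneg (hw0 p) (by nlinarith [Real.cos_le_one (∑ j, k j * (p.1 j : ℝ))]))
      (fun p => ?_) (hsum.mul_left 2)
    have := Real.neg_one_le_cos (∑ j, k j * (p.1 j : ℝ))
    nlinarith [hw0 p]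
  have hA : ∑' p, w p * u p ^ 2
      ≤ (1/2) * ∑' p, w p * (1 - Real.cos (2 * ∑ j, l j * (p.1 j : ℝ))) := by
    rw [← tsum_mul_left]
    refine Summable.tsum_le_tsum (fun p => ?_) (by simpa [hF2] using hsumF2) (hsumA.mul_left _)
    have hsin : u p ^ 2 = Real.sin (∑ j, l j * (p.1 j : ℝ)) ^ 2 := sq_abs _
    have h2 : Real.sin (∑ j, l j * (p.1 j : ℝ)) ^ 2
        = (1 - Real.cos (2 * ∑ j, l j * (p.1 j : ℝ))) / 2 := by
      have := Real.cos_sq (∑ j, l j * (p.1 j : ℝ))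
      have hpy := Real.sin_sq_add_cos_sq (∑ j, l j * (p.1 j : ℝ))
      nlinarith
    rw [hsin, h2]
    exact le_of_eq (by ring)
  have hB : ∑' p, w p * v p ^ 2 ≤ 2 * ∑' p, w p * (1 - Real.cos (∑ j, k j * (p.1 j : ℝ))) := by
    rw [← tsum_mul_left]
    refine Summable.tsum_le_tsum (fun p => ?_) (by simpa [hG2] using hsumG2) (hsumB.mul_left 2)
    have hsin : v p ^ 2 = Real.sin (∑ j, k j * (p.1 j : ℝ)) ^ 2 := sq_abs _
    have hpy := Real.sin_sq_add_cos_sq (∑ j, k j * (p.1 j : ℝ))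
    have hc := Real.neg_one_le_cos (∑ j, k j * (p.1 j : ℝ))
    rw [hsin, show (2:ℝ) * (w p * (1 - Real.cos (∑ j, k j * (p.1 j : ℝ))))
      = w p * (2 * (1 - Real.cos (∑ j, k j * (p.1 j : ℝ)))) by ring]
    exact mul_le_mul_of_nonneg_left (by nlinarith) (hw0 p)
  -- finish
  have hB0 : 0 ≤ ∑' p, w p * v p ^ 2 := tsum_nonneg fun p => mul_nonneg (hw0 p) (sq_nonneg _)
  have hA0 : 0 ≤ ∑' p, w p * u p ^ 2 := tsum_nonneg fun p => mul_nonneg (hw0 p) (sq_nonneg _)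
  calc ‖hatAsin a z l k‖ ^ 2
      ≤ (∑' p, w p * (u p * v p)) ^ 2 :=
        pow_le_pow_left₀ (norm_nonneg _) hS 2
    _ ≤ (∑' p, w p * u p ^ 2) * ∑' p, w p * v p ^ 2 := hCS
    _ ≤ ((1/2) * ∑' p, w p * (1 - Real.cos (2 * ∑ j, l j * (p.1 j : ℝ))))
          * (2 * ∑' p, w p * (1 - Real.cos (∑ j, k j * (p.1 j : ℝ)))) := by
        have hAnn : 0 ≤ ∑' p, w p * (1 - Real.cos (2 * ∑ j, l j * (p.1 j : ℝ))) :=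
          tsum_nonneg fun p => mul_nonneg (hw0 p)
            (by nlinarith [Real.cos_le_one (2 * ∑ j, l j * (p.1 j : ℝ))])
        exact mul_le_mul hA hB hB0 (by linarith)
    _ = _ := by ring
end

section
/- Let d ≥ 3 and let D : ℤ^d → ℝ be defined by D(x) = 2^{-d} if |x_j| = 1 for every j, and D(x) = 0 otherwise. Then for all integers ν ≥ 1 and N ≥ 1, ∑_{n=ν}^{∞} D^{*2n}(0) ≤ ∑_{n=0}^{N-1} D^{*2(n+ν)}(0) + π^{-d/2}·(ν+N)^{-d/2} + (2/(π^{d/2}(d-2)))·(ν+N)^{(2-d)/2}. -/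
open scoped BigOperators
open Filter Nat Topology

/-- The step distribution of the nearest-neighbor random walk on the
`d`-dimensional BCC lattice. -/
noncomputable def bccStep (d : ℕ) : (Fin d → ℤ) → ℝ := fun x =>
  if ∀ j, |x j| = 1 then (1 : ℝ) / 2 ^ d else 0

/-- `n`-fold convolution power of `f` on `ℤ^d`; the `0`-th power is the
Kronecker delta at the origin. -/
noncomputable def convPow (d : ℕ) (f : (Fin d → ℤ) → ℝ) : ℕ → (Fin d → ℤ) → ℝ
  | 0, x => if x = 0 then 1 else 0
  | n + 1, x => ∑' y : Fin d → ℤ, convPow d f n y * f (x - y)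

/-- Number of ±1 walks of length `n` from `0` to `k`. -/
def wcount (n : ℕ) (k : ℤ) : ℕ :=
  if 2 ∣ (k + n) ∧ 0 ≤ k + n then n.choose ((k + n) / 2).toNat else 0

lemma wcount_zero (k : ℤ) : wcount 0 k = if k = 0 then 1 else 0 := by
  unfold wcount
  rcases eq_or_ne k 0 with rfl | hk
  · norm_num
  · rw [if_neg hk]
    split_ifs with h
    · exact Nat.choose_eq_zero_of_lt (by omega)
    · rfl

lemma wcount_succ (n : ℕ) (k : ℤ) :
    wcount (n + 1) k = wcount n (k - 1) + wcount n (k + 1) := by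
  unfold wcount
  by_cases h2 : 2 ∣ (k + n + 1)
  · by_cases hpos : 0 ≤ k + n + 1
    · rcases eq_or_lt_of_le hpos with heq | hlt
      · rw [if_pos (by omega), if_neg (by omega), if_pos (by omega)]
        have e1 : ((k + ((n+1 : ℕ) : ℤ)) / 2).toNat = 0 := by omega
        have e3 : ((k + 1 + n) / 2).toNat = 0 := by omega
        rw [e1, e3]; simp
      · have hge : 2 ≤ k + n + 1 := by omega
        obtain ⟨m', hm⟩ : ∃ m', ((k + n + 1) / 2).toNat = m' + 1 :=
          ⟨((k + n + 1) / 2).toNat - 1, by omega⟩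
        rw [if_pos (by omega), if_pos (by omega), if_pos (by omega)]
        have e1 : ((k + ((n+1 : ℕ) : ℤ)) / 2).toNat = m' + 1 := by omega
        have e2 : ((k - 1 + n) / 2).toNat = m' := by omega
        have e3 : ((k + 1 + n) / 2).toNat = m' + 1 := by omega
        rw [e1, e2, e3]
        exact Nat.choose_succ_succ n m'
    · rw [if_neg (by omega), if_neg (by omega), if_neg (by omega)]
  · rw [if_neg (by omega), if_neg (by omega), if_neg (by omega)]

lemma wcount_central (n : ℕ) : wcount (2 * n) 0 = (2 * n).choose n := by
  unfold wcount
  rw [if_pos (by omega)]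
  congr 1
  omega

/-- One-dimensional ±1 step distribution. -/
noncomputable def g1 : ℤ → ℝ := fun k => if |k| = 1 then 1 / 2 else 0

lemma bccStep_eq_prod (d : ℕ) (x : Fin d → ℤ) : bccStep d x = ∏ j, g1 (x j) := by
  unfold bccStep g1
  split_ifs with h
  · rw [Finset.prod_congr rfl (fun j _ => if_pos (h j)), Finset.prod_const]
    simp [div_pow]
  · push_neg at h
    obtain ⟨j, hj⟩ := h
    refine (Finset.prod_eq_zero (Finset.mem_univ j) ?_).symm
    exact if_neg hj

lemma tsum_pi_prod {d : ℕ} (h : Fin d → ℤ → ℝ) (S : Fin d → Finset ℤ)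
    (hs : ∀ j z, z ∉ S j → h j z = 0) :
    ∑' y : Fin d → ℤ, ∏ j, h j (y j) = ∏ j, ∑' z, h j z := by
  have l1 : ∑' y : Fin d → ℤ, ∏ j, h j (y j)
      = ∑ y ∈ Fintype.piFinset S, ∏ j, h j (y j) := by
    apply tsum_eq_sum
    intro y hy
    rw [Fintype.mem_piFinset] at hy
    push_neg at hy
    obtain ⟨j, hj⟩ := hy
    exact Finset.prod_eq_zero (Finset.mem_univ j) (hs j _ hj)
  rw [l1, ← Finset.prod_univ_sum]
  exact Finset.prod_congr rfl fun j _ => (tsum_eq_sum fun z hz => hs j z hz).symm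

lemma conv1 (n : ℕ) (k : ℤ) :
    ∑' z : ℤ, ((1 / 2 : ℝ) ^ n * wcount n z) * g1 (k - z)
      = (1 / 2 : ℝ) ^ (n + 1) * wcount (n + 1) k := by
  have hsupp : ∀ z : ℤ, z ∉ ({k - 1, k + 1} : Finset ℤ) →
      ((1 / 2 : ℝ) ^ n * wcount n z) * g1 (k - z) = 0 := by
    intro z hz
    simp only [Finset.mem_insert, Finset.mem_singleton] at hz
    push_neg at hz
    have : g1 (k - z) = 0 := by
      unfold g1
      rw [if_neg]
      intro habs
      rcases (abs_eq (by norm_num : (0:ℤ) ≤ 1)).mp habs with h1 | h1 <;> omega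
    rw [this, mul_zero]
  rw [tsum_eq_sum hsupp, Finset.sum_pair (by omega : k - 1 ≠ k + 1)]
  have e1 : g1 (k - (k - 1)) = 1 / 2 := by norm_num [g1]
  have e2 : g1 (k - (k + 1)) = 1 / 2 := by
    have : k - (k + 1) = -1 := by ring
    rw [this]; norm_num [g1]
  rw [e1, e2, wcount_succ]
  push_cast
  ring

lemma convPow_eq (d : ℕ) :
    ∀ (n : ℕ) (x : Fin d → ℤ),
      convPow d (bccStep d) n x = ∏ j, ((1 / 2 : ℝ) ^ n * wcount n (x j))
  | 0, x => by
    show (if x = 0 then (1:ℝ) else 0) = _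
    rcases eq_or_ne x 0 with rfl | hx
    · simp [wcount_zero]
    · rw [if_neg hx]
      obtain ⟨j, hj⟩ := Function.ne_iff.mp hx
      have hj' : x j ≠ 0 := by simpa using hj
      refine (Finset.prod_eq_zero (Finset.mem_univ j) ?_).symm
      rw [wcount_zero, if_neg hj']
      simp
  | n + 1, x => by
    show (∑' y : Fin d → ℤ, convPow d (bccStep d) n y * bccStep d (x - y)) = _
    have key : ∀ y : Fin d → ℤ,
        convPow d (bccStep d) n y * bccStep d (x - y)
          = ∏ j, (((1 / 2 : ℝ) ^ n * wcount n (y j)) * g1 (x j - y j)) := by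
      intro y
      rw [convPow_eq d n y, bccStep_eq_prod, ← Finset.prod_mul_distrib]
      exact Finset.prod_congr rfl fun j _ => by rw [Pi.sub_apply]
    rw [tsum_congr key,
      tsum_pi_prod (fun j z => ((1 / 2 : ℝ) ^ n * wcount n z) * g1 (x j - z))
        (fun j => {x j - 1, x j + 1}) ?_]
    · exact Finset.prod_congr rfl fun j _ => conv1 n (x j)
    · intro j z hz
      show ((1 / 2 : ℝ) ^ n * wcount n z) * g1 (x j - z) = 0
      simp only [Finset.mem_insert, Finset.mem_singleton] at hz
      push_neg at hz
      have : g1 (x j - z) = 0 := by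
        unfold g1
        rw [if_neg]
        intro habs
        rcases (abs_eq (by norm_num : (0:ℤ) ≤ 1)).mp habs with h1 | h1 <;> omega
      rw [this, mul_zero]

lemma central_bound (n : ℕ) (hn : 1 ≤ n) :
    (1 / 2 : ℝ) ^ (2 * n) * ((2 * n).choose n : ℝ) ≤ 1 / Real.sqrt (Real.pi * n) := by
  have hn0 : (0:ℝ) < n := by exact_mod_cast hn
  set e := Real.exp 1 with he
  set t := Real.sqrt n with ht
  have htpos : 0 < t := Real.sqrt_pos.mpr hn0
  have ht2 : t ^ 2 = n := Real.sq_sqrt hn0.le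
  set u := Real.sqrt 2 with hu
  have hu2 : u ^ 2 = 2 := Real.sq_sqrt (by norm_num)
  have hupos : 0 < u := Real.sqrt_pos.mpr (by norm_num)
  set P := ((n:ℝ) / e) ^ n with hP
  have hPpos : 0 < P := pow_pos (div_pos hn0 (Real.exp_pos 1)) n
  set s := Stirling.stirlingSeq with hs
  have hs_pos : ∀ m : ℕ, 1 ≤ m → 0 < s m := by
    intro m hm
    obtain ⟨m', rfl⟩ : ∃ m', m = m' + 1 := ⟨m - 1, by omega⟩
    exact Stirling.stirlingSeq'_pos m'
  have hsn := hs_pos n hn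
  have hs2n := hs_pos (2 * n) (by omega)
  have fact_eq : ∀ m : ℕ, 1 ≤ m →
      (m.factorial : ℝ) = s m * (Real.sqrt (2 * m) * ((m : ℝ) / e) ^ m) := by
    intro m hm
    have hm0 : (0:ℝ) < m := by exact_mod_cast hm
    have hden : Real.sqrt (2 * m) * ((m : ℝ) / e) ^ m ≠ 0 := by positivity
    rw [hs]
    unfold Stirling.stirlingSeq
    rw [div_mul_cancel₀ _ hden]
  have hfn := fact_eq n hn
  have hf2n := fact_eq (2 * n) (by omega)
  have hC : ((2 * n).choose n : ℝ) * (n.factorial : ℝ) * (n.factorial : ℝ)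
      = ((2 * n).factorial : ℝ) := by
    have h := Nat.choose_mul_factorial_mul_factorial (show n ≤ 2 * n by omega)
    rw [show 2 * n - n = n from by omega] at h
    exact_mod_cast congrArg (Nat.cast : ℕ → ℝ) h
  have hsq4 : Real.sqrt (2 * ((2 * n : ℕ) : ℝ)) = 2 * t := by
    rw [show (2 * ((2 * n : ℕ) : ℝ)) = 4 * (n:ℝ) by push_cast; ring,
      Real.sqrt_mul (by norm_num : (0:ℝ) ≤ 4),
      show (4:ℝ) = 2 ^ 2 by norm_num, Real.sqrt_sq (by norm_num : (0:ℝ) ≤ 2), ht]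
  have hsqn : Real.sqrt (2 * (n : ℝ)) = u * t := by
    rw [Real.sqrt_mul (by norm_num : (0:ℝ) ≤ 2), ht, hu]
  have hpow2n : (((2 * n : ℕ) : ℝ) / e) ^ (2 * n) = 4 ^ n * P ^ 2 := by
    push_cast
    rw [show ((2:ℝ) * n) / e = 2 * ((n:ℝ) / e) by ring, mul_pow, pow_mul,
      mul_comm 2 n, pow_mul, hP]
    norm_num
  have key : ((2 * n).choose n : ℝ) * (s n ^ 2 * t) = s (2 * n) * 4 ^ n := by
    have h1 := hC
    rw [hfn, hf2n, hsq4, hsqn, hpow2n] at h1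
    have h2 : (((2 * n).choose n : ℝ) * (s n ^ 2 * t)) * (2 * t * P ^ 2)
        = (s (2 * n) * 4 ^ n) * (2 * t * P ^ 2) := by
      calc (((2 * n).choose n : ℝ) * (s n ^ 2 * t)) * (2 * t * P ^ 2)
          = ((2 * n).choose n : ℝ) * (s n * (u * t * ((n:ℝ)/e) ^ n))
            * (s n * (u * t * ((n:ℝ)/e) ^ n)) := by rw [← hu2, ← hP]; ring
        _ = s (2 * n) * (2 * t * (4 ^ n * P ^ 2)) := h1
        _ = (s (2 * n) * 4 ^ n) * (2 * t * P ^ 2) := by ring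
    exact mul_right_cancel₀ (by positivity) h2
  have hanti : s (2 * n) ≤ s n := by
    have h := Stirling.stirlingSeq'_antitone (show n - 1 ≤ 2 * n - 1 by omega)
    simpa [Function.comp, show n - 1 + 1 = n from by omega,
      show 2 * n - 1 + 1 = 2 * n from by omega] using h
  have hpi_le : Real.sqrt Real.pi ≤ s n := by
    have lim : Tendsto (s ∘ Nat.succ) atTop (𝓝 (Real.sqrt Real.pi)) :=
      Stirling.tendsto_stirlingSeq_sqrt_pi.comp (tendsto_add_atTop_nat 1)
    have h := Stirling.stirlingSeq'_antitone.le_of_tendsto lim (n - 1)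
    simpa [Function.comp, show n - 1 + 1 = n from by omega] using h
  have B : Real.sqrt Real.pi * s (2 * n) ≤ s n ^ 2 := by
    nlinarith [Real.sqrt_nonneg Real.pi]
  have e4 : (1 / 2 : ℝ) ^ (2 * n) * 4 ^ n = 1 := by
    rw [pow_mul, ← mul_pow]
    norm_num
  have hsqrt_pos : 0 < Real.sqrt (Real.pi * n) :=
    Real.sqrt_pos.mpr (by positivity)
  rw [le_div_iff₀ hsqrt_pos]
  have final : (1 / 2 : ℝ) ^ (2 * n) * ((2 * n).choose n : ℝ) * Real.sqrt (Real.pi * n)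
      = Real.sqrt Real.pi * s (2 * n) / s n ^ 2 := by
    rw [Real.sqrt_mul Real.pi_pos.le, ← ht, eq_div_iff (by positivity : s n ^ 2 ≠ 0)]
    linear_combination (Real.sqrt Real.pi * (1 / 2 : ℝ) ^ (2 * n)) * key
      + (Real.sqrt Real.pi * s (2 * n)) * e4
  rw [final]
  exact (div_le_one (by positivity)).mpr B

lemma tail_summable (p : ℝ) (hp : 1 < p) (M : ℕ) :
    Summable (fun i : ℕ => ((i : ℝ) + M) ^ (-p)) := by
  have h : Summable (fun n : ℕ => (n : ℝ) ^ (-p)) :=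
    Real.summable_nat_rpow.mpr (by linarith)
  have h2 := (summable_nat_add_iff M).mpr h
  refine h2.congr fun i => ?_
  push_cast
  ring_nf

lemma tail_bound (p : ℝ) (hp : 1 < p) (M : ℕ) (hM : 1 ≤ M) :
    ∑' i : ℕ, ((i : ℝ) + M) ^ (-p) ≤ (M : ℝ) ^ (-p) + (M : ℝ) ^ (1 - p) / (p - 1) := by
  have hM0 : (0:ℝ) < M := by exact_mod_cast hM
  rw [Summable.tsum_eq_zero_add (tail_summable p hp M)]
  have h0 : ((0 : ℕ) : ℝ) + M = (M : ℝ) := by norm_num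
  rw [h0]
  gcongr
  apply Real.tsum_le_of_sum_range_le (fun i => Real.rpow_nonneg (by positivity) _)
  intro K
  have hanti : AntitoneOn (fun x : ℝ => x ^ (-p)) (Set.Icc (M : ℝ) ((M : ℝ) + K)) := by
    intro x hx y hy hxy
    exact Real.rpow_le_rpow_of_nonpos (lt_of_lt_of_le hM0 hx.1) hxy (by linarith)
  have hint := hanti.sum_le_integral
  have hval : (∫ x in (M : ℝ)..((M : ℝ) + K), x ^ (-p))
      = (((M : ℝ) + K) ^ (-p + 1) - (M : ℝ) ^ (-p + 1)) / (-p + 1) := by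
    apply integral_rpow
    right
    constructor
    · intro h; linarith
    · intro h
      rw [Set.uIcc_of_le (by linarith : (M:ℝ) ≤ (M:ℝ) + K)] at h
      have := h.1
      linarith
  calc ∑ i ∈ Finset.range K, (((i + 1 : ℕ) : ℝ) + M) ^ (-p)
      = ∑ i ∈ Finset.range K, ((M : ℝ) + ((i + 1 : ℕ) : ℝ)) ^ (-p) := by
        refine Finset.sum_congr rfl fun i _ => ?_
        push_cast
        ring_nf
    _ ≤ ∫ x in (M : ℝ)..((M : ℝ) + K), x ^ (-p) := hint
    _ = (((M : ℝ) + K) ^ (-p + 1) - (M : ℝ) ^ (-p + 1)) / (-p + 1) := hval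
    _ = ((M : ℝ) ^ (1 - p) - ((M : ℝ) + K) ^ (1 - p)) / (p - 1) := by
        rw [show -p + 1 = 1 - p by ring]
        rw [div_eq_div_iff (by linarith) (by linarith)]
        ring
    _ ≤ (M : ℝ) ^ (1 - p) / (p - 1) := by
        gcongr
        · exact sub_le_self _ (Real.rpow_nonneg (by positivity) _)

theorem epsilon_one_bound
    (d : ℕ) (hd : 3 ≤ d) (ν N : ℕ) (hν : 1 ≤ ν) (hN : 1 ≤ N) :
    ∑' n : ℕ, convPow d (bccStep d) (2 * (n + ν)) 0 ≤
      (∑ n ∈ Finset.range N, convPow d (bccStep d) (2 * (n + ν)) 0)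
        + Real.pi ^ (-(d : ℝ) / 2) * ((ν : ℝ) + N) ^ (-(d : ℝ) / 2)
        + 2 / (Real.pi ^ ((d : ℝ) / 2) * ((d : ℝ) - 2)) * ((ν : ℝ) + N) ^ ((2 - (d : ℝ)) / 2) := by
  set p : ℝ := (d : ℝ) / 2 with hpdef
  have hd2 : (3:ℝ) ≤ (d:ℝ) := by exact_mod_cast hd
  have hp : 1 < p := by rw [hpdef]; linarith
  -- closed form and bounds for the walk return probabilities
  have hFval : ∀ n : ℕ, convPow d (bccStep d) (2 * n) 0
      = ((1 / 2 : ℝ) ^ (2 * n) * ((2 * n).choose n : ℝ)) ^ d := by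
    intro n
    rw [convPow_eq d (2 * n) 0]
    rw [Finset.prod_congr rfl (fun j _ => by rw [Pi.zero_apply, wcount_central]),
      Finset.prod_const]
    simp
  have hFnonneg : ∀ n : ℕ, 0 ≤ convPow d (bccStep d) (2 * n) 0 := by
    intro n
    rw [hFval n]
    positivity
  have hFle : ∀ n : ℕ, 1 ≤ n →
      convPow d (bccStep d) (2 * n) 0 ≤ Real.pi ^ (-p) * ((n : ℝ)) ^ (-p) := by
    intro n hn
    have hn0 : (0:ℝ) < n := by exact_mod_cast hn
    have hπn : (0:ℝ) < Real.pi * n := by positivity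
    rw [hFval n]
    have h1 : (1 / 2 : ℝ) ^ (2 * n) * ((2 * n).choose n : ℝ)
        ≤ 1 / Real.sqrt (Real.pi * n) := central_bound n hn
    have h2 : ((1 / 2 : ℝ) ^ (2 * n) * ((2 * n).choose n : ℝ)) ^ d
        ≤ (1 / Real.sqrt (Real.pi * n)) ^ d :=
      pow_le_pow_left₀ (by positivity) h1 d
    refine h2.trans_eq ?_
    have h3 : (1 / Real.sqrt (Real.pi * n)) = (Real.pi * n) ^ (-(1/2) : ℝ) := by
      rw [Real.rpow_neg hπn.le, Real.sqrt_eq_rpow, one_div]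
    rw [h3, ← Real.rpow_natCast ((Real.pi * n) ^ (-(1/2) : ℝ)) d, ← Real.rpow_mul hπn.le,
      show (-(1/2) : ℝ) * (d : ℝ) = -p by rw [hpdef]; ring,
      Real.mul_rpow Real.pi_pos.le hn0.le]
  -- summability
  have hmaj : ∀ n : ℕ, convPow d (bccStep d) (2 * (n + ν)) 0
      ≤ Real.pi ^ (-p) * (((n : ℝ) + ν)) ^ (-p) := by
    intro n
    have := hFle (n + ν) (by omega)
    refine this.trans_eq ?_
    push_cast
    ring_nf
  have hmaj_sum : Summable (fun n : ℕ => Real.pi ^ (-p) * (((n : ℝ) + ν)) ^ (-p)) :=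
    (tail_summable p hp ν).mul_left _
  have hS : Summable (fun n : ℕ => convPow d (bccStep d) (2 * (n + ν)) 0) :=
    Summable.of_nonneg_of_le (fun n => hFnonneg (n + ν)) hmaj hmaj_sum
  -- split the sum
  rw [← Summable.sum_add_tsum_nat_add N hS]
  have hM : 1 ≤ N + ν := by omega
  have hM0 : (0:ℝ) < ((N + ν : ℕ) : ℝ) := by exact_mod_cast hM
  -- bound the tail
  have htail : ∑' n : ℕ, convPow d (bccStep d) (2 * (n + N + ν)) 0
      ≤ Real.pi ^ (-p) * ∑' i : ℕ, ((i : ℝ) + (N + ν : ℕ)) ^ (-p) := by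
    have hS' : Summable (fun n : ℕ => convPow d (bccStep d) (2 * (n + N + ν)) 0) :=
      (summable_nat_add_iff (f := fun n : ℕ => convPow d (bccStep d) (2 * (n + ν)) 0) N).mpr hS
    rw [← tsum_mul_left]
    apply Summable.tsum_le_tsum _ hS' ((tail_summable p hp (N + ν)).mul_left _)
    intro n
    have := hFle (n + N + ν) (by omega)
    refine this.trans_eq ?_
    push_cast
    ring_nf
  have htail2 : Real.pi ^ (-p) * ∑' i : ℕ, ((i : ℝ) + (N + ν : ℕ)) ^ (-p)
      ≤ Real.pi ^ (-p) * (((N + ν : ℕ) : ℝ) ^ (-p) + ((N + ν : ℕ) : ℝ) ^ (1 - p) / (p - 1)) := by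
    apply mul_le_mul_of_nonneg_left (tail_bound p hp (N + ν) hM)
    positivity
  -- final arithmetic
  have harith : Real.pi ^ (-p) * (((N + ν : ℕ) : ℝ) ^ (-p) + ((N + ν : ℕ) : ℝ) ^ (1 - p) / (p - 1))
      = Real.pi ^ (-(d : ℝ) / 2) * ((ν : ℝ) + N) ^ (-(d : ℝ) / 2)
        + 2 / (Real.pi ^ ((d : ℝ) / 2) * ((d : ℝ) - 2)) * ((ν : ℝ) + N) ^ ((2 - (d : ℝ)) / 2) := by
    have hcast : ((N + ν : ℕ) : ℝ) = (ν : ℝ) + N := by push_cast; ring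
    have he1 : -p = -(d : ℝ) / 2 := by rw [hpdef]; ring
    have he2 : (1 - p) = (2 - (d : ℝ)) / 2 := by rw [hpdef]; ring
    rw [hcast, he1, he2]
    have hπp : (0:ℝ) < Real.pi ^ ((d : ℝ) / 2) := Real.rpow_pos_of_pos Real.pi_pos _
    have hd2' : ((d : ℝ) - 2) ≠ 0 := by linarith
    have hp1 : p - 1 = ((d:ℝ) - 2) / 2 := by rw [hpdef]; ring
    rw [hp1, show -(d:ℝ)/2 = -((d:ℝ)/2) by ring, Real.rpow_neg Real.pi_pos.le]
    field_simp
  have step : (∑' n : ℕ, convPow d (bccStep d) (2 * (n + N + ν)) 0)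
      ≤ Real.pi ^ (-(d : ℝ) / 2) * ((ν : ℝ) + N) ^ (-(d : ℝ) / 2)
        + 2 / (Real.pi ^ ((d : ℝ) / 2) * ((d : ℝ) - 2)) * ((ν : ℝ) + N) ^ ((2 - (d : ℝ)) / 2) := by
    rw [← harith]
    exact htail.trans htail2
  rw [add_assoc]
  exact add_le_add_right (htail.trans (htail2.trans_eq harith)) _
end
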